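/- Realization is downwards transitive: let γ : X ⇉ Y, δ : Y ⇉ Z, γ' : U ⇉ V, δ' : V ⇉ W be generalized multi-representations. If h : X ⇉ U realizes g : Y ⇉ V via (γ, γ'), and g realizes f : Z ⇉ W via (δ, δ'), then h realizes f via (δ ⊙ γ, δ' ⊙ γ'), where ⊙ denotes relational composition of multi-functions. -/

import Mathlib

/-- Composition of multi-functions: `a ∈ dom (g ∘ f)` iff `a ∈ dom f` and
`f a ⊆ dom g`, and then `(g ∘ f) a = g [f a]`. -/
def MComp {A B C : Type*} (g : B → Set C) (f : A → Set B) : A → Set C :=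
  fun a => {c | (f a).Nonempty ∧ (∀ b ∈ f a, (g b).Nonempty) ∧ ∃ b ∈ f a, c ∈ g b}

/-- Relational composition of multi-functions. -/
def RComp {A B C : Type*} (g : B → Set C) (f : A → Set B) : A → Set C :=
  fun a => {c | ∃ b, b ∈ f a ∧ c ∈ g b}

/-- `r` realizes `g` via the generalized multi-representations `(β, γ)`. -/
def Realizes {U V X Y : Type*} (r : U → Set V) (g : X → Set Y)
    (β : U → Set X) (γ : V → Set Y) : Prop :=
  ∀ u x, x ∈ β u → (g x).Nonempty →
    (r u).Nonempty ∧ ∀ v ∈ r u, (g x ∩ γ v).Nonempty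

/-- A multi-function is a generalized multi-representation iff it is surjective. -/
def Surj {A B : Type*} (β : A → Set B) : Prop := ∀ b, ∃ a, b ∈ β a

theorem stmt_6_general {X Y Z U V W : Type*}
    (γ : X → Set Y) (δ : Y → Set Z) (γ' : U → Set V) (δ' : V → Set W)
    (h : X → Set U) (g : Y → Set V) (f : Z → Set W)
    (hh : Realizes h g γ γ') (hg : Realizes g f δ δ') :
    Realizes h f (RComp δ γ) (RComp δ' γ') := by
  rintro x z ⟨y, hy, hz⟩ hfz
  obtain ⟨hgy, hg_meets⟩ := hg y z hz hfz
  obtain ⟨hhx, hh_meets⟩ := hh x y hy hgy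
  refine ⟨hhx, fun u hu => ?_⟩
  obtain ⟨v, hv, hvu⟩ := hh_meets u hu
  obtain ⟨w, hwf, hwv⟩ := hg_meets v hv
  exact ⟨w, hwf, v, hvu, hwv⟩

/-- realization is downwards transitive: if `h` realizes `g` via
`(γ, γ')` and `g` realizes `f` via `(δ, δ')`, then `h` realizes `f` via
`(δ ⊙ γ, δ' ⊙ γ')`. -/
theorem stmt_6 {X Y Z U V W : Type*}
    (γ : X → Set Y) (δ : Y → Set Z) (γ' : U → Set V) (δ' : V → Set W)
    (hγ : Surj γ) (hδ : Surj δ) (hγ' : Surj γ') (hδ' : Surj δ')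
    (h : X → Set U) (g : Y → Set V) (f : Z → Set W)
    (hh : Realizes h g γ γ') (hg : Realizes g f δ δ') :
    Realizes h f (RComp δ γ) (RComp δ' γ') :=
  stmt_6_general γ δ γ' δ' h g f hh hg
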